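/- Let M1 = {(x^(k), p^(k))}_{k∈{0,...,K}} be a 0-reducible RochetNet menu with witness set K1 (0 ∈ K1, and with F-probability 1 the buyer's selected option lies in K1). Let φ1 : {0,...,K} → K1 be any map with φ1(k) = k for all k ∈ K1, and define the menu M̂1 whose k-th option is (x^(φ1(k)), p^(φ1(k))). Then for every λ ∈ [0,1], the convex combination M = λ M1 + (1−λ) M̂1 satisfies Rev(M) ≥ Rev(M1). -/

import Mathlib

/-!
On the event where the buyer's selected option `k` of `M₁` lies in `K₁`, the option `k` of
`λ M₁ + (1 - λ) M̂₁` coincides with that of `M₁`, and every option of the combination has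
utility at most `λ u(k) + (1 - λ) u(k) = u(k)`, since both `M₁` and `M̂₁` only offer options
of `M₁`. So the buyer can still pick `k`, and the price extracted can only increase.
This event has full measure, and integrating the pointwise inequality gives the claim.
-/

open MeasureTheory Finset

namespace RN

/-- A RochetNet menu: for each of the `K+1` option indices, an allocation in `[0,1]^n`
and a price. -/
abbrev Menu (n K : ℕ) := Fin (K + 1) → (Fin n → ℝ) × ℝ

/-- Inner product of a valuation and an allocation. -/
def dotp {n : ℕ} (v x : Fin n → ℝ) : ℝ := ∑ j, v j * x j

/-- A valid menu: allocations in `[0,1]^n`, nonnegative prices, default option `(0,0)`. -/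
def IsMenu {n K : ℕ} (M : Menu n K) : Prop :=
  (∀ k j, 0 ≤ (M k).1 j ∧ (M k).1 j ≤ 1) ∧ (∀ k, 0 ≤ (M k).2) ∧ M 0 = 0

/-- Utility of option `k` for valuation `v`. -/
def util {n K : ℕ} (M : Menu n K) (v : Fin n → ℝ) (k : Fin (K + 1)) : ℝ :=
  dotp v (M k).1 - (M k).2

/-- Price extracted at valuation `v`: the maximal price among utility-maximizing options. -/
noncomputable def price {n K : ℕ} (M : Menu n K) (v : Fin n → ℝ) : ℝ :=
  sSup {p : ℝ | ∃ k, (∀ k', util M v k' ≤ util M v k) ∧ p = (M k).2}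

/-- Option `k` is the buyer's selected option at `v`: it maximizes utility and, among
utility maximizers, has maximal price. -/
def Selected {n K : ℕ} (M : Menu n K) (v : Fin n → ℝ) (k : Fin (K + 1)) : Prop :=
  (∀ k', util M v k' ≤ util M v k) ∧ (M k).2 = price M v

/-- The set of valuations. -/
def V (n : ℕ) : Set (Fin n → ℝ) :=
  {v | (∀ j, 0 ≤ v j ∧ v j ≤ 1) ∧ ∑ j, v j ≤ 1}

/-- Expected revenue of menu `M` under valuation distribution `F`. -/
noncomputable def Rev {n K : ℕ} (F : Measure (Fin n → ℝ)) (M : Menu n K) : ℝ :=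
  ∫ v, price M v ∂F

/-- Option-wise convex combination `lam • M + (1 - lam) • M'` of two menus. -/
noncomputable def comb {n K : ℕ} (lam : ℝ) (M M' : Menu n K) : Menu n K :=
  fun k => (fun j => lam * (M k).1 j + (1 - lam) * (M' k).1 j,
            lam * (M k).2 + (1 - lam) * (M' k).2)

/-- `M` is `ε`-reducible: some subset `K'` of options containing the default option, of
cardinality at most `√(K+1)`, contains the buyer's selected option with probability
at least `1 - ε`. -/
def Reducible {n K : ℕ} (F : Measure (Fin n → ℝ)) (M : Menu n K) (ε : ℝ) : Prop :=
  ∃ K' : Finset (Fin (K + 1)), 0 ∈ K' ∧ (K'.card : ℝ) ≤ Real.sqrt (K + 1) ∧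
    (F {v | ∃ k ∈ K', Selected M v k}).toReal ≥ 1 - ε

/-- `M₁` and `M₂` are `ε`-mode-connected by a piecewise linear path with `pieces` linear
pieces, all whose menus are valid and have revenue at least `min (Rev M₁) (Rev M₂) - ε`. -/
def PLConnected {n K : ℕ} (F : Measure (Fin n → ℝ)) (M₁ M₂ : Menu n K) (ε : ℝ)
    (pieces : ℕ) : Prop :=
  ∃ P : Fin (pieces + 1) → Menu n K, P 0 = M₁ ∧ P (Fin.last pieces) = M₂ ∧
    (∀ i, IsMenu (P i)) ∧
    ∀ i : Fin pieces, ∀ lam ∈ Set.Icc (0 : ℝ) 1,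
      Rev F (comb lam (P i.castSucc) (P i.succ)) ≥ min (Rev F M₁) (Rev F M₂) - ε

variable {n K : ℕ}

section Price

variable (M : Menu n K) (v : Fin n → ℝ)

lemma finite_maximizerPrices :
    {p : ℝ | ∃ k, (∀ k', util M v k' ≤ util M v k) ∧ p = (M k).2}.Finite := by
  refine (Set.finite_range fun k => (M k).2).subset ?_
  rintro _ ⟨k, -, rfl⟩
  exact ⟨k, rfl⟩

lemma exists_selected : ∃ k, Selected M v k := by
  obtain ⟨k, hk⟩ := Finite.exists_max (util M v)
  have hne : {p : ℝ | ∃ k, (∀ k', util M v k' ≤ util M v k) ∧ p = (M k).2}.Nonempty :=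
    ⟨_, k, hk, rfl⟩
  obtain ⟨k, hk, hp⟩ := hne.csSup_mem (finite_maximizerPrices M v)
  exact ⟨k, hk, hp.symm⟩

lemma le_price {k : Fin (K + 1)} (hk : ∀ k', util M v k' ≤ util M v k) :
    (M k).2 ≤ price M v :=
  le_csSup (finite_maximizerPrices M v).bddAbove ⟨k, hk, rfl⟩

lemma price_mem_range : ∃ k, price M v = (M k).2 := by
  obtain ⟨k, -, hk⟩ := exists_selected M v
  exact ⟨k, hk.symm⟩

open Classical in
/-- Off the maximizers we put the smallest price, which never exceeds the price extracted. -/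
lemma price_eq_sup' :
    price M = univ.sup' univ_nonempty fun k v =>
      if ∀ k', util M v k' ≤ util M v k then (M k).2
      else univ.inf' univ_nonempty fun k => (M k).2 := by
  funext v
  rw [Finset.sup'_apply]
  obtain ⟨k₀, hmax₀, hprice₀⟩ := exists_selected M v
  refine le_antisymm ?_ (sup'_le _ _ fun k _ => ?_)
  · rw [← hprice₀]
    exact le_sup'_of_le _ (mem_univ k₀) (by rw [if_pos hmax₀])
  · split_ifs with hk
    · exact le_price M v hk
    · exact (inf'_le _ (mem_univ k₀)).trans hprice₀.le

end Price

lemma util_comb (lam : ℝ) (M M' : Menu n K) (v : Fin n → ℝ) (k : Fin (K + 1)) :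
    util (comb lam M M') v k = lam * util M v k + (1 - lam) * util M' v k := by
  simp only [util, dotp, comb, mul_add, sum_add_distrib, mul_left_comm _ lam,
    mul_left_comm _ (1 - lam), ← mul_sum]
  ring

lemma price_le_price_comb {lam : ℝ} (hlam : lam ∈ Set.Icc (0 : ℝ) 1) {M M' : Menu n K}
    {v : Fin n → ℝ} {k : Fin (K + 1)} (hk : Selected M v k) (hM'k : M' k = M k)
    (hM' : ∀ k', util M' v k' ≤ util M v k) :
    price M v ≤ price (comb lam M M') v := by
  obtain ⟨hmax, hprice⟩ := hk
  have hmaxComb : ∀ k', util (comb lam M M') v k' ≤ util (comb lam M M') v k := by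
    intro k'
    have h₁ := mul_le_mul_of_nonneg_left (hmax k') hlam.1
    have h₂ := mul_le_mul_of_nonneg_left (hM' k') (sub_nonneg.2 hlam.2)
    have hM'k_util : util M' v k = util M v k := by simp only [util, hM'k]
    rw [util_comb, util_comb, hM'k_util]
    linarith
  have hpriceComb : (comb lam M M' k).2 = (M k).2 := by
    simp only [comb, hM'k]
    ring
  rw [← hprice, ← hpriceComb]
  exact le_price _ v hmaxComb

lemma measurable_util (M : Menu n K) (k : Fin (K + 1)) : Measurable fun v => util M v k :=
  (measurable_sum _ fun j _ => (measurable_pi_apply j).mul_const _).sub measurable_const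

lemma measurableSet_isMax_util (M : Menu n K) (k : Fin (K + 1)) :
    MeasurableSet {v | ∀ k', util M v k' ≤ util M v k} := by
  simp only [Set.ofPred_forall]
  exact .iInter fun k' => measurableSet_le (measurable_util M k') (measurable_util M k)

lemma measurable_price (M : Menu n K) : Measurable (price M) := by
  classical
  rw [price_eq_sup']
  exact measurable_sup' _ fun k _ =>
    Measurable.ite (measurableSet_isMax_util M k) measurable_const measurable_const

lemma measurableSet_exists_selected (M : Menu n K) (S : Finset (Fin (K + 1))) :
    MeasurableSet {v | ∃ k ∈ S, Selected M v k} := by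
  simp only [Selected, Set.ofPred_exists, Set.ofPred_and]
  exact .iUnion fun k => (MeasurableSet.const _).inter <| (measurableSet_isMax_util M k).inter
    (measurableSet_eq_fun measurable_const (measurable_price M))

lemma integrable_price (F : Measure (Fin n → ℝ)) [IsFiniteMeasure F] (M : Menu n K) :
    Integrable (price M) F := by
  refine .of_bound (measurable_price M).aestronglyMeasurable (∑ k, |(M k).2|)
    (ae_of_all _ fun v => ?_)
  obtain ⟨k, hk⟩ := price_mem_range M v
  rw [hk, Real.norm_eq_abs]
  exact single_le_sum (f := fun k => |(M k).2|) (fun _ _ => abs_nonneg _) (mem_univ k)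

theorem statement2_general {n K : ℕ} (F : Measure (Fin n → ℝ)) [IsProbabilityMeasure F]
    (M₁ : Menu n K)
    (K₁ : Finset (Fin (K + 1)))
    (hsel : F {v | ∃ k ∈ K₁, Selected M₁ v k} = 1)
    (φ₁ : Fin (K + 1) → Fin (K + 1))
    (hφid : ∀ k ∈ K₁, φ₁ k = k) :
    ∀ lam ∈ Set.Icc (0 : ℝ) 1,
      Rev F (comb lam M₁ (fun k => M₁ (φ₁ k))) ≥ Rev F M₁ := by
  intro lam hlam
  have hae : ∀ᵐ v ∂F, ∃ k ∈ K₁, Selected M₁ v k := by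
    rw [ae_iff_measure_eq (measurableSet_exists_selected M₁ K₁).nullMeasurableSet, hsel,
      measure_univ]
  refine integral_mono_ae (integrable_price F M₁) (integrable_price F _) ?_
  filter_upwards [hae] with v ⟨k, hkK₁, hk⟩
  exact price_le_price_comb hlam hk (by rw [hφid k hkK₁]) fun k' => hk.1 (φ₁ k')

/-- Let `M₁` be a `0`-reducible menu with witness set `K₁` (containing
the default option, and with probability `1` the selected option lies in `K₁`).  Let
`φ₁ : {0,…,K} → K₁` be any map fixing `K₁` pointwise, and let `M̂₁` be the menu whose
`k`-th option is the `φ₁ k`-th option of `M₁`.  Then every convex combination of `M₁`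
and `M̂₁` has revenue at least `Rev M₁`. -/
theorem statement2 {n K : ℕ} (F : Measure (Fin n → ℝ)) [IsProbabilityMeasure F]
    (hFV : F (V n) = 1) (M₁ : Menu n K) (hM₁ : IsMenu M₁)
    (K₁ : Finset (Fin (K + 1))) (h0 : 0 ∈ K₁)
    (hsel : F {v | ∃ k ∈ K₁, Selected M₁ v k} = 1)
    (φ₁ : Fin (K + 1) → Fin (K + 1)) (hφmem : ∀ k, φ₁ k ∈ K₁)
    (hφid : ∀ k ∈ K₁, φ₁ k = k) :
    ∀ lam ∈ Set.Icc (0 : ℝ) 1,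
      Rev F (comb lam M₁ (fun k => M₁ (φ₁ k))) ≥ Rev F M₁ :=
  statement2_general F M₁ K₁ hsel φ₁ hφid

end RN
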